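/- Let G be a connected graph with at least 3 vertices that is not complete. Then the rotation graph R(G) contains a 5-cycle. Consequently R(G) is not bipartite and χ(R(G)) ≥ 3. -/

import Mathlib

open scoped Classical

universe u

variable {V : Type u}

/-- A rooted tree structure on a support set: data only, well-formedness is `RTree.WF`. -/
structure RTree (V : Type u) where
  supp : Set V
  root : V
  parent : V → Option V

namespace RTree

def parentRel (T : RTree V) (a b : V) : Prop := T.parent a = some b

/-- `u` is an ancestor of `v` in `T` (reflexively). -/
def isAncestor (T : RTree V) (u v : V) : Prop :=
  Relation.ReflTransGen T.parentRel v u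

def WF (T : RTree V) : Prop :=
  T.root ∈ T.supp ∧
  T.parent T.root = none ∧
  (∀ v, v ∉ T.supp → T.parent v = none) ∧
  (∀ v ∈ T.supp, v ≠ T.root → ∃ u ∈ T.supp, T.parent v = some u) ∧
  (∀ v ∈ T.supp, T.isAncestor T.root v)

/-- The vertex set of the subtree `T|c` rooted at `c`. -/
def descendants (T : RTree V) (c : V) : Set V :=
  {v | v ∈ T.supp ∧ T.isAncestor c v}

/-- Iterated parent. -/
def pIter (T : RTree V) : ℕ → V → Option V
  | 0, w => some w
  | n + 1, w => (T.parent w).bind (T.pIter n)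

/-- The depth `d_{T,v}` of `v` in `T` (distance to the root). -/
noncomputable def depthOf (T : RTree V) (v : V) : ℕ :=
  sInf {n | T.pIter n v = some T.root}

/-- The subtree of `T` rooted at `c`. -/
noncomputable def subtreeAt (T : RTree V) (c : V) : RTree V where
  supp := T.descendants c
  root := c
  parent := fun w => if w = c then none else if w ∈ T.descendants c then T.parent w else none

/-- The vertex at depth `i` on the path from the root to `v`. -/
noncomputable def ancAt (T : RTree V) (v : V) (i : ℕ) : V :=
  (T.pIter (T.depthOf v - i) v).getD T.root

/-- Insertion `T(i,x,v)` of a new vertex `x` at depth `i` along the root-to-`v` path: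
`i = 0` makes `x` the new root, `i = d_{T,v}+1` adds `x` as a new child of `v`, and
for `1 ≤ i ≤ d_{T,v}` the `i`-th edge of the root-to-`v` path is subdivided by `x`. -/
noncomputable def insertAt (T : RTree V) (i : ℕ) (x v : V) : RTree V :=
  if i = 0 then
    { supp := insert x T.supp
      root := x
      parent := fun w => if w = x then none else if w = T.root then some x else T.parent w }
  else if i = T.depthOf v + 1 then
    { supp := insert x T.supp
      root := T.root
      parent := fun w => if w = x then some v else T.parent w }
  else
    { supp := insert x T.supp
      root := T.root
      parent := fun w =>
        if w = x then some (T.ancAt v (i - 1))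
        else if w = T.ancAt v i then some x
        else T.parent w }

/-- Elimination `p(T,x)` of a vertex `x` (meaningful when `x` has at most one child). -/
noncomputable def elim (T : RTree V) (x : V) : RTree V where
  supp := T.supp \ {x}
  root :=
    if T.root = x then (if h : ∃ w, T.parent w = some x then h.choose else T.root) else T.root
  parent := fun w =>
    if w = x then none
    else if T.parent w = some x then T.parent x
    else T.parent w

end RTree

/-- Reachability inside the vertex set `s`, i.e. in the induced subgraph `G[s]`. -/
def reachWithin (G : SimpleGraph V) (s : Set V) : V → V → Prop :=
  Relation.ReflTransGen (fun a b => a ∈ s ∧ b ∈ s ∧ G.Adj a b)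

/-- Recursive definition of a search tree: the children of the root are the roots of
search trees on the connected components of the graph minus the root. -/
inductive IsSearchTreeRec {V : Type u} (G : SimpleGraph V) : RTree V → Prop
  | intro (T : RTree V) (hwf : T.WF)
      (hconn : ∀ a ∈ T.supp, ∀ b ∈ T.supp, reachWithin G T.supp a b)
      (hcomp : ∀ c, T.parent c = some T.root →
        ∀ w, w ∈ T.descendants c ↔
          (w ∈ T.supp ∧ w ≠ T.root ∧ reachWithin G (T.supp \ {T.root}) c w))
      (hrec : ∀ c, T.parent c = some T.root → IsSearchTreeRec G (T.subtreeAt c)) :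
      IsSearchTreeRec G T

/-- `T` is a search tree on the induced subgraph `G[s]`. -/
def IsSearchTreeOn (G : SimpleGraph V) (s : Set V) (T : RTree V) : Prop :=
  T.supp = s ∧ IsSearchTreeRec G T

/-- `T` is a search tree on `G`. -/
def IsSearchTree (G : SimpleGraph V) (T : RTree V) : Prop :=
  IsSearchTreeOn G Set.univ T

/-- The `uv`-rotation of `T` (for `v` a child of `u`): `u` becomes a child of `v`, `v` takes
`u`'s old parent, and each subtree `S` of `v` is reattached below `u` iff `u` has a
`G`-neighbour in `S`. -/
noncomputable def rotate (G : SimpleGraph V) (T : RTree V) (u v : V) : RTree V where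
  supp := T.supp
  root := if T.root = u then v else T.root
  parent := fun w =>
    if w = v then T.parent u
    else if w = u then some v
    else if T.parent w = some v then
      (if ∃ z ∈ T.descendants w, G.Adj u z then some u else some v)
    else T.parent w

def IsRotation (G : SimpleGraph V) (S S' : RTree V) : Prop :=
  ∃ u v, S.parent v = some u ∧ S' = rotate G S u v

def rotAdj (G : SimpleGraph V) (S S' : RTree V) : Prop :=
  S ≠ S' ∧ (IsRotation G S S' ∨ IsRotation G S' S)

/-- The rotation graph of the induced subgraph `G[s]`: vertices are the search trees on
`G[s]`, two trees being adjacent iff they differ by a single rotation. -/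
def rotationGraphOn (G : SimpleGraph V) (s : Set V) :
    SimpleGraph {T : RTree V // IsSearchTreeOn G s T} where
  Adj T T' := rotAdj G T.1 T'.1
  symm := ⟨fun T T' h => ⟨Ne.symm h.1, Or.symm h.2⟩⟩
  loopless := ⟨fun T h => h.1 rfl⟩

/-- A vertex of `K` of maximal depth in `T` (the vertex `v_{λ(T)}`). -/
noncomputable def deepestIn (T : RTree V) (K : Set V) : V :=
  if h : ∃ u, u ∈ K ∧ ∀ w ∈ K, T.depthOf w ≤ T.depthOf u then h.choose else T.root

/-- `u` and `v` have different relative order in `T` and `T'`. -/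
def diffRelOrder (T T' : RTree V) (u v : V) : Prop :=
  (T.isAncestor u v ∧ ¬ T'.isAncestor u v) ∨ (¬ T.isAncestor u v ∧ T'.isAncestor u v)

/-- The step from `S` to `S'` is a rotation of the pair `u`, `v`. -/
def isUVStep (G : SimpleGraph V) (u v : V) (S S' : RTree V) : Prop :=
  (S.parent v = some u ∧ S' = rotate G S u v) ∨ (S.parent u = some v ∧ S' = rotate G S v u)

/-- A threshold graph: obtainable from the one-vertex graph by repeatedly adding either an
isolated vertex or a universal vertex. -/
def IsThresholdGraph {V : Type u} [Fintype V] (G : SimpleGraph V) : Prop :=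
  ∃ e : Fin (Fintype.card V) ≃ V,
    ∀ i : Fin (Fintype.card V),
      (∀ j, j < i → ¬ G.Adj (e i) (e j)) ∨ (∀ j, j < i → G.Adj (e i) (e j))

/-- The complete split graph `SPK_{p,q}`: a clique of size `p` completely joined to an
independent set of size `q`. -/
def completeSplitGraph (p q : ℕ) : SimpleGraph (Fin p ⊕ Fin q) where
  Adj a b := a ≠ b ∧ (a.isLeft = true ∨ b.isLeft = true)
  symm := ⟨fun a b h => ⟨Ne.symm h.1, Or.symm h.2⟩⟩
  loopless := ⟨fun a h => h.1 rfl⟩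


/-!
An induced path `a – b – c` exists because `G` is connected and not complete. On `{a, b, c}` the
five search trees (the paths `abc`, `acb`, `cab`, `cba` and the cherry rooted at `b`) form a
5-cycle of rotations. Listing the other vertices as `x₁, …, xₖ` so that every
`{xᵢ, …, xₖ, a, b, c}` is connected, placing the path `x₁ – ⋯ – xₖ` above a search tree on
`{a, b, c}` gives a search tree on `G`. This map is an injective homomorphism of rotation graphs,
because rotating a parent-child pair commutes with adding a new root. So the 5-cycle appears in
`R(G)`, and an odd cycle forces `χ(R(G)) ≥ 3`.
-/

attribute [ext] RTree

section

variable {G : SimpleGraph V} {s t : Set V} {T : RTree V} {p q u v w x : V}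

lemma reachWithin_mono (hst : s ⊆ t) (h : reachWithin G s p q) : reachWithin G t p q :=
  Relation.ReflTransGen.mono (fun _ _ hab => ⟨hst hab.1, hst hab.2.1, hab.2.2⟩) _ _ h

lemma reachWithin_symm (h : reachWithin G s p q) : reachWithin G s q p :=
  Relation.ReflTransGen.mono (fun _ _ hab => ⟨hab.2.1, hab.1, hab.2.2.symm⟩) _ _ h.swap

lemma eq_of_reachWithin_of_forall_not_adj (hx : ∀ y ∈ s, ¬ G.Adj x y)
    (h : reachWithin G s x w) : w = x := by
  induction h with
  | refl => rfl
  | tail _ hstep ih => subst ih; exact absurd hstep.2.2 (hx _ hstep.2.1)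

def IsConnectedWithin (G : SimpleGraph V) (s : Set V) : Prop :=
  ∀ p ∈ s, ∀ q ∈ s, reachWithin G s p q

lemma isConnectedWithin_singleton (G : SimpleGraph V) (x : V) : IsConnectedWithin G {x} := by
  rintro p rfl q rfl
  exact .refl

lemma IsConnectedWithin.insert_of_adj (hs : IsConnectedWithin G s) (hu : u ∈ s)
    (huv : G.Adj u v) : IsConnectedWithin G (insert v s) := by
  have hsub : s ⊆ insert v s := Set.subset_insert v s
  have hv : ∀ p ∈ s, reachWithin G (insert v s) v p := fun p hp =>
    .head ⟨Set.mem_insert v s, hsub hu, huv.symm⟩ (reachWithin_mono hsub (hs u hu p hp))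
  rintro p (rfl | hp) q (rfl | hq)
  · exact .refl
  · exact hv q hq
  · exact reachWithin_symm (hv p hp)
  · exact reachWithin_mono hsub (hs p hp q hq)

lemma IsSearchTreeRec.wf (h : IsSearchTreeRec G T) : T.WF := by
  cases h; assumption

lemma IsSearchTreeOn.isConnectedWithin (h : IsSearchTreeOn G s T) : IsConnectedWithin G s := by
  obtain ⟨rfl, h⟩ := h
  cases h; assumption

end

namespace RTree

variable {G : SimpleGraph V} {T T' : RTree V} {u v w x z : V}

def single (x : V) : RTree V := ⟨{x}, x, fun _ => none⟩

noncomputable def addRoot (x : V) (T : RTree V) : RTree V where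
  supp := insert x T.supp
  root := x
  parent w := if w = T.root then some x else T.parent w

lemma WF.mem_supp_of_parent_eq_some (hT : T.WF) (h : T.parent v = some u) :
    v ∈ T.supp ∧ u ∈ T.supp := by
  by_cases hv : v ∈ T.supp
  · by_cases hvr : v = T.root
    · rw [hvr, hT.2.1] at h; cases h
    · obtain ⟨u', hu', h'⟩ := hT.2.2.2.1 v hv hvr
      rw [h, Option.some_inj] at h'
      exact ⟨hv, h' ▸ hu'⟩
  · rw [hT.2.2.1 v hv] at h; cases h

lemma WF.ne_root_of_parent_eq_some (hT : T.WF) (h : T.parent v = some u) : v ≠ T.root := by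
  rintro rfl; rw [hT.2.1] at h; cases h

lemma WF.root_ne_of_notMem (hT : T.WF) (hx : x ∉ T.supp) : T.root ≠ x :=
  fun h => hx (h ▸ hT.1)

lemma WF.descendants_root (hT : T.WF) : T.descendants T.root = T.supp :=
  Set.ext fun v => ⟨And.left, fun hv => ⟨hv, hT.2.2.2.2 v hv⟩⟩

lemma eq_of_isAncestor_of_parent_eq_none (hz : T.parent z = none) (h : T.isAncestor w z) :
    w = z := by
  rcases h.cases_head with h | ⟨m, hm, -⟩
  · exact h.symm
  · exact absurd (hz.symm.trans hm) (by simp)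

lemma descendants_eq_singleton (hx : x ∈ T.supp) (hleaf : ∀ w, T.parent w ≠ some x) :
    T.descendants x = {x} := by
  refine Set.eq_singleton_iff_unique_mem.2 ⟨⟨hx, .refl⟩, fun z ⟨_, hz⟩ => ?_⟩
  rcases hz.cases_tail with h | ⟨m, -, hm⟩
  · exact h.symm
  · exact absurd hm (hleaf m)

lemma subtreeAt_eq_single (hx : x ∈ T.supp) (hleaf : ∀ w, T.parent w ≠ some x) :
    T.subtreeAt x = single x := by
  ext w
  · simp [subtreeAt, single, descendants_eq_singleton hx hleaf]
  · rfl
  · simp only [subtreeAt, single, descendants_eq_singleton hx hleaf, Set.mem_singleton_iff]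
    split_ifs <;> simp_all

lemma isSearchTreeRec_single (G : SimpleGraph V) (x : V) : IsSearchTreeRec G (single x) := by
  refine ⟨_, ⟨rfl, rfl, fun _ _ => rfl, ?_, ?_⟩, isConnectedWithin_singleton G x,
    fun c hc => (nomatch hc), fun c hc => (nomatch hc)⟩
  · rintro v rfl hv; exact absurd rfl hv
  · rintro v rfl; exact .refl

lemma addRoot_parent_of_ne_root (hw : w ≠ T.root) : (addRoot x T).parent w = T.parent w :=
  if_neg hw

lemma parentRel_addRoot_iff (hT : T.WF) {a b : V} :
    (addRoot x T).parentRel a b ↔ T.parentRel a b ∨ a = T.root ∧ b = x := by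
  unfold parentRel addRoot
  by_cases ha : a = T.root
  · simp [ha, hT.2.1, eq_comm]
  · simp [ha]

lemma isAncestor_addRoot_iff (hT : T.WF) (hx : x ∉ T.supp) (hw : w ≠ x) :
    (addRoot x T).isAncestor w z ↔ T.isAncestor w z := by
  refine ⟨fun h => ?_, Relation.ReflTransGen.mono
    (fun a b hab => (parentRel_addRoot_iff hT).2 (.inl hab)) _ _⟩
  induction h with
  | refl => exact .refl
  | @tail b c _ hbc ih =>
    obtain hbc' | ⟨-, rfl⟩ := (parentRel_addRoot_iff hT).1 hbc
    · refine .tail (ih ?_) hbc'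
      rintro rfl
      exact absurd hbc' (by simp [parentRel, hT.2.2.1 _ hx])
    · exact absurd rfl hw

lemma descendants_addRoot (hT : T.WF) (hx : x ∉ T.supp) (hw : w ≠ x) :
    (addRoot x T).descendants w = T.descendants w := by
  ext z
  show z ∈ insert x T.supp ∧ _ ↔ z ∈ T.supp ∧ _
  rw [isAncestor_addRoot_iff hT hx hw]
  refine ⟨fun ⟨hz, hwz⟩ => ⟨hz.resolve_left ?_, hwz⟩, fun ⟨hz, hwz⟩ => ⟨.inr hz, hwz⟩⟩
  rintro rfl
  exact hw (eq_of_isAncestor_of_parent_eq_none (hT.2.2.1 _ hx) hwz)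

lemma WF.addRoot (hT : T.WF) (hx : x ∉ T.supp) : (addRoot x T).WF := by
  refine ⟨Set.mem_insert x _, ?_, fun v hv => ?_, fun v hv hvx => ?_, fun v hv => ?_⟩
  · show (RTree.addRoot x T).parent x = none
    rw [addRoot_parent_of_ne_root (hT.root_ne_of_notMem hx).symm, hT.2.2.1 x hx]
  · have hv' : v ∉ T.supp := fun h => hv (.inr h)
    rw [addRoot_parent_of_ne_root (hT.root_ne_of_notMem hv').symm, hT.2.2.1 v hv']
  · have hv' : v ∈ T.supp := hv.resolve_left hvx
    by_cases hvr : v = T.root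
    · exact ⟨x, Set.mem_insert x _, if_pos hvr⟩
    · obtain ⟨u, hu, huv⟩ := hT.2.2.2.1 v hv' hvr
      exact ⟨u, .inr hu, (addRoot_parent_of_ne_root hvr).trans huv⟩
  · rcases hv with rfl | hv
    · exact .refl
    · exact ((isAncestor_addRoot_iff hT hx (hT.root_ne_of_notMem hx)).2 (hT.2.2.2.2 v hv)).tail
        ((parentRel_addRoot_iff hT).2 (.inr ⟨rfl, rfl⟩))

lemma eq_root_of_addRoot_parent_eq_some (hT : T.WF) (hx : x ∉ T.supp)
    (h : (addRoot x T).parent v = some x) : v = T.root := by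
  by_contra hv
  rw [addRoot_parent_of_ne_root hv] at h
  exact hx (hT.mem_supp_of_parent_eq_some h).2

lemma subtreeAt_addRoot_root (hT : T.WF) (hx : x ∉ T.supp) :
    (addRoot x T).subtreeAt T.root = T := by
  have hdesc : (addRoot x T).descendants T.root = T.supp := by
    rw [descendants_addRoot hT hx (hT.root_ne_of_notMem hx), hT.descendants_root]
  ext w
  · simp only [subtreeAt, hdesc]
  · rfl
  · simp only [subtreeAt, hdesc]
    split_ifs with hwr hw
    · simp [hwr, hT.2.1]
    · simp [addRoot_parent_of_ne_root hwr]
    · simp [hT.2.2.1 w hw]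

lemma isSearchTreeRec_addRoot (hT : IsSearchTreeRec G T) (hx : x ∉ T.supp)
    (hconn : IsConnectedWithin G (insert x T.supp)) : IsSearchTreeRec G (addRoot x T) := by
  have hwf := hT.wf
  have hrx := hwf.root_ne_of_notMem hx
  refine ⟨_, hwf.addRoot hx, hconn, fun c hc w => ?_, fun c hc => ?_⟩ <;>
    obtain rfl := eq_root_of_addRoot_parent_eq_some hwf hx hc
  · rw [descendants_addRoot hwf hx hrx, hwf.descendants_root]
    show w ∈ T.supp ↔ w ∈ insert x T.supp ∧ w ≠ x ∧
      reachWithin G (insert x T.supp \ {x}) T.root w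
    rw [Set.insert_sdiff_self_of_notMem hx]
    cases hT with
    | intro _ _ hconnT _ _ =>
      exact ⟨fun hw => ⟨.inr hw, fun h => hx (h ▸ hw), hconnT _ hwf.1 w hw⟩,
        fun ⟨hw, hwx, _⟩ => hw.resolve_left hwx⟩
  · rw [subtreeAt_addRoot_root hwf hx]
    exact hT

lemma rotate_addRoot (hT : T.WF) (hx : x ∉ T.supp) (huv : T.parent v = some u) :
    rotate G (addRoot x T) u v = addRoot x (rotate G T u v) := by
  obtain ⟨hv, hu⟩ := hT.mem_supp_of_parent_eq_some huv
  have hvr := hT.ne_root_of_parent_eq_some huv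
  have hrx := hT.root_ne_of_notMem hx
  have hux : u ≠ x := fun h => hx (h ▸ hu)
  have hvx : v ≠ x := fun h => hx (h ▸ hv)
  refine RTree.ext rfl (by simp [rotate, addRoot, hux.symm]) (funext fun w => ?_)
  by_cases hwx : w = x
  · subst hwx
    simp only [rotate, addRoot, hux.symm, ↓reduceIte, hvx.symm, hrx.symm, hT.2.2.1 w hx,
      reduceCtorEq, right_eq_ite_iff, imp_false]
    split_ifs
    exacts [hvx.symm, hrx.symm]
  · simp only [rotate, descendants_addRoot hT hx hwx]
    simp only [addRoot]
    split_ifs <;> first | rfl | simp_all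

lemma eq_of_addRoot_eq (hT : T.WF) (hT' : T'.WF) (hx : x ∉ T.supp) (hx' : x ∉ T'.supp)
    (h : addRoot x T = addRoot x T') : T = T' := by
  have hsupp : T.supp = T'.supp := by
    have := congrArg supp h
    simp only [addRoot] at this
    rw [← Set.insert_sdiff_self_of_notMem hx, this, Set.insert_sdiff_self_of_notMem hx']
  have hroot : T.root = T'.root := by
    by_contra hne
    have hpar := congrFun (congrArg parent h) T.root
    rw [show (addRoot x T).parent T.root = some x from if_pos rfl,
      addRoot_parent_of_ne_root hne] at hpar
    exact hx' (hT'.mem_supp_of_parent_eq_some hpar.symm).2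
  refine RTree.ext hsupp hroot (funext fun w => ?_)
  by_cases hw : w = T.root
  · rw [hw, hT.2.1, hroot, hT'.2.1]
  · have hpar := congrFun (congrArg parent h) w
    rwa [addRoot_parent_of_ne_root hw, addRoot_parent_of_ne_root (hroot ▸ hw)] at hpar

end RTree

open RTree

lemma IsRotation.addRoot {G : SimpleGraph V} {T T' : RTree V} {x : V} (hT : T.WF)
    (hx : x ∉ T.supp) (h : IsRotation G T T') : IsRotation G (addRoot x T) (addRoot x T') := by
  obtain ⟨u, v, huv, rfl⟩ := h
  exact ⟨u, v, (addRoot_parent_of_ne_root (hT.ne_root_of_parent_eq_some huv)).trans huv,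
    (rotate_addRoot hT hx huv).symm⟩

/-- `M = [x₁, …, xₖ]` lists distinct vertices outside `s` such that every `{xᵢ, …, xₖ} ∪ s` is
connected; `M.foldr addRoot` then puts the path `x₁ – ⋯ – xₖ` above a search tree on `G[s]`. -/
inductive IsStem (G : SimpleGraph V) (s : Set V) : List V → Prop
  | nil : IsStem G s []
  | cons {x : V} {M : List V} : IsStem G s M → x ∉ {z | z ∈ M} ∪ s →
      IsConnectedWithin G (insert x ({z | z ∈ M} ∪ s)) → IsStem G s (x :: M)

namespace IsStem

variable {G : SimpleGraph V} {s t : Set V} {M : List V} {B B' : RTree V}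

lemma append_singleton {v : V} (hM : IsStem G (insert v s) M) (hv : v ∉ s)
    (hs : IsConnectedWithin G (insert v s)) : IsStem G s (M ++ [v]) := by
  have hset : ∀ N : List V, {z | z ∈ N ++ [v]} ∪ s = {z | z ∈ N} ∪ insert v s := fun N => by
    ext
    simp only [List.mem_append, List.mem_cons, List.not_mem_nil, or_false, Set.mem_union,
      Set.mem_ofPred_eq, Set.union_insert, Set.mem_insert_iff]
    tauto
  induction hM with
  | nil => exact .cons .nil (by simpa using hv) (by simpa using hs)
  | cons _ hx hconn ih => exact .cons ih (hset _ ▸ hx) (hset _ ▸ hconn)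

lemma isSearchTreeOn_foldr (hM : IsStem G s M) (hB : IsSearchTreeOn G s B) :
    IsSearchTreeOn G ({z | z ∈ M} ∪ s) (M.foldr addRoot B) := by
  induction hM with
  | nil => simpa using hB
  | @cons x M _ hx hconn ih =>
    obtain ⟨hsupp, hrec⟩ := ih
    refine ⟨?_, isSearchTreeRec_addRoot hrec ?_ ?_⟩
    · show insert x _ = _
      rw [hsupp]; ext; simp [or_assoc]
    all_goals rwa [hsupp]

lemma isRotation_foldr (hM : IsStem G s M) (hB : IsSearchTreeOn G s B)
    (h : IsRotation G B B') : IsRotation G (M.foldr addRoot B) (M.foldr addRoot B') := by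
  induction hM with
  | nil => exact h
  | cons hM hx _ ih =>
    have hF := hM.isSearchTreeOn_foldr hB
    exact ih.addRoot hF.2.wf (hF.1 ▸ hx)

lemma foldr_injective (hM : IsStem G s M) (hB : IsSearchTreeOn G s B)
    (hB' : IsSearchTreeOn G s B') (h : M.foldr addRoot B = M.foldr addRoot B') : B = B' := by
  induction hM with
  | nil => exact h
  | cons hM hx _ ih =>
    have hF := hM.isSearchTreeOn_foldr hB
    have hF' := hM.isSearchTreeOn_foldr hB'
    exact ih (eq_of_addRoot_eq hF.2.wf hF'.2.wf (hF.1 ▸ hx) (hF'.1 ▸ hx) h)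

noncomputable def rotationGraphHom (hM : IsStem G s M) (ht : {z | z ∈ M} ∪ s = t) :
    rotationGraphOn G s →g rotationGraphOn G t where
  toFun B := ⟨M.foldr addRoot B.1, ht ▸ hM.isSearchTreeOn_foldr B.2⟩
  map_rel' {B B'} h := ⟨fun he => h.1 (hM.foldr_injective B.2 B'.2 he),
    h.2.imp (hM.isRotation_foldr B.2) (hM.isRotation_foldr B'.2)⟩

lemma rotationGraphHom_injective (hM : IsStem G s M) (ht : {z | z ∈ M} ∪ s = t) :
    Function.Injective (hM.rotationGraphHom ht) :=
  fun B B' h => Subtype.ext (hM.foldr_injective B.2 B'.2 (congrArg Subtype.val h))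

end IsStem

lemma SimpleGraph.Connected.exists_isStem [Finite V] {G : SimpleGraph V} (hG : G.Connected)
    {s : Set V} (hs : IsConnectedWithin G s) (hne : s.Nonempty) :
    ∃ M, IsStem G s M ∧ {z | z ∈ M} ∪ s = Set.univ := by
  induction hn : sᶜ.ncard using Nat.strong_induction_on generalizing s with
  | _ n ih =>
  by_cases hsu : s = Set.univ
  · exact ⟨[], .nil, by simp [hsu]⟩
  obtain ⟨w, hw⟩ := (Set.ne_univ_iff_exists_notMem s).1 hsu
  obtain ⟨u, hu⟩ := hne
  obtain ⟨d, -, hd, hd'⟩ := (hG.preconnected u w).some.exists_boundary_dart s hu hw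
  have hs' := hs.insert_of_adj hd d.adj
  have hlt : (insert d.snd s)ᶜ.ncard < n := hn ▸ Set.ncard_lt_ncard
    (compl_lt_compl_iff_lt.2 (Set.ssubset_insert hd')) (Set.toFinite _)
  obtain ⟨M, hM, hcover⟩ := ih _ hlt hs' ⟨_, Set.mem_insert _ _⟩ rfl
  refine ⟨M ++ [d.snd], hM.append_singleton hd' hs', ?_⟩
  rw [← hcover]
  ext
  simp only [List.mem_append, List.mem_cons, List.not_mem_nil, or_false, Set.mem_union,
    Set.mem_ofPred_eq, Set.union_insert, Set.mem_insert_iff]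
  tauto

namespace RTree

variable {G : SimpleGraph V} {a b c w x y z : V}

noncomputable def path3 (x y z : V) : RTree V := addRoot x (addRoot y (single z))

noncomputable def cherry (a b c : V) : RTree V :=
  ⟨{a, b, c}, b, fun w => if w = a ∨ w = c then some b else none⟩

lemma isSearchTreeOn_path3 (hxy : x ≠ y) (hxz : x ≠ z) (hyz : G.Adj y z)
    (hx : G.Adj y x ∨ G.Adj z x) : IsSearchTreeOn G {x, y, z} (path3 x y z) := by
  have hzy : IsConnectedWithin G {y, z} :=
    (isConnectedWithin_singleton G z).insert_of_adj rfl hyz.symm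
  refine ⟨rfl, isSearchTreeRec_addRoot (isSearchTreeRec_addRoot (isSearchTreeRec_single G z)
    hyz.ne hzy) (show x ∉ ({y, z} : Set V) by simp [hxy, hxz]) ?_⟩
  rcases hx with hx | hx
  · exact hzy.insert_of_adj (.inl rfl) hx
  · exact hzy.insert_of_adj (.inr rfl) hx

lemma cherry_parent_eq_some : (cherry a b c).parent w = some x ↔ (w = a ∨ w = c) ∧ b = x := by
  simp only [cherry]
  split_ifs with h <;> simp [h]

lemma cherry_wf (hab : a ≠ b) (hbc : b ≠ c) : (cherry a b c).WF := by
  have hsupp : ∀ {v}, v ∈ (cherry a b c).supp ↔ v = a ∨ v = b ∨ v = c := Iff.rfl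
  refine ⟨hsupp.2 (.inr (.inl rfl)), by simp [cherry, hab.symm, hbc], fun v hv => ?_,
    fun v hv hvb => ⟨b, hsupp.2 (.inr (.inl rfl)), cherry_parent_eq_some.2 ⟨?_, rfl⟩⟩, fun v hv => ?_⟩
  · simp only [hsupp, not_or] at hv
    simp [cherry, hv.1, hv.2.2]
  · exact (hsupp.1 hv).imp_right (Or.resolve_left · hvb)
  · by_cases hvb : v = b
    · exact hvb ▸ .refl
    · exact .single (cherry_parent_eq_some.2 ⟨(hsupp.1 hv).imp_right (Or.resolve_left · hvb), rfl⟩)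

lemma isSearchTreeOn_cherry (hab : G.Adj a b) (hbc : G.Adj b c) (hac : ¬ G.Adj a c) :
    IsSearchTreeOn G {a, b, c} (cherry a b c) := by
  have hleaf : ∀ {x}, x = a ∨ x = c → ∀ w, (cherry a b c).parent w ≠ some x := fun hx w h => by
    obtain ⟨-, rfl⟩ := cherry_parent_eq_some.1 h
    exact hx.elim (fun h => hab.ne h.symm) hbc.ne
  have hsupp : ∀ {x}, x = a ∨ x = c → x ∈ (cherry a b c).supp := by
    rintro x (rfl | rfl) <;> simp [cherry]
  have hconn : IsConnectedWithin G {a, b, c} :=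
    ((isConnectedWithin_singleton G c).insert_of_adj rfl hbc.symm).insert_of_adj (.inl rfl)
      hab.symm
  refine ⟨rfl, _, cherry_wf hab.ne hbc.ne, hconn, fun x hx w => ?_, fun x hx => ?_⟩ <;>
    obtain ⟨hx, -⟩ := cherry_parent_eq_some.1 hx
  · rw [descendants_eq_singleton (hsupp hx) (hleaf hx)]
    refine ⟨?_, fun ⟨_, _, hr⟩ => eq_of_reachWithin_of_forall_not_adj (fun y hy => ?_) hr⟩
    · rintro rfl
      refine ⟨hsupp hx, fun h => ?_, .refl⟩
      rcases hx with rfl | rfl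
      exacts [hab.ne h, hbc.ne h.symm]
    · have hy' : y = a ∨ y = c := by
        simp only [cherry, Set.mem_sdiff, Set.mem_insert_iff, Set.mem_singleton_iff] at hy; tauto
      rcases hx with rfl | rfl <;> rcases hy' with rfl | rfl
      exacts [G.irrefl, hac, fun h => hac h.symm, G.irrefl]
  · rw [subtreeAt_eq_single (hsupp hx) (hleaf hx)]
    exact isSearchTreeRec_single G x

lemma descendants_path3_leaf (hxz : x ≠ z) (hyz : y ≠ z) : (path3 x y z).descendants z = {z} :=
  descendants_eq_singleton (by simp [path3, addRoot, single]) fun w => by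
    by_cases hwy : w = y <;> by_cases hwz : w = z <;> simp [path3, addRoot, single, *, Ne.symm]

lemma isRotation_path3_lower (hxy : x ≠ y) (hyz : y ≠ z) :
    IsRotation G (path3 x y z) (path3 x z y) := by
  refine ⟨y, z, by simp [path3, addRoot, single, hyz.symm], .symm <| RTree.ext ?_ ?_ (funext fun w => ?_)⟩
  · simp [rotate, path3, addRoot, single, Set.pair_comm]
  · simp [rotate, path3, addRoot, single, hxy]
  · simp only [rotate, path3, addRoot, single]
    split_ifs <;> simp_all [Ne.symm]

lemma isRotation_path3_upper_of_adj (hxy : x ≠ y) (hxz : x ≠ z) (hyz : y ≠ z) (h : G.Adj x z) :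
    IsRotation G (path3 x y z) (path3 y x z) := by
  refine ⟨x, y, by simp [path3, addRoot, single], .symm <| RTree.ext ?_ ?_ (funext fun w => ?_)⟩
  · simp [rotate, path3, addRoot, single, Set.insert_comm]
  · simp [rotate, path3, addRoot, single]
  · by_cases hw : w = z
    · subst hw
      simp only [rotate, descendants_path3_leaf hxz hyz]
      simp [h, path3, addRoot, single, hyz.symm, hxz.symm]
    · simp only [rotate, path3, addRoot, single]
      split_ifs <;> simp_all [Ne.symm]

lemma isRotation_path3_upper_of_not_adj (hxy : x ≠ y) (hxz : x ≠ z) (hyz : y ≠ z)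
    (h : ¬ G.Adj x z) : IsRotation G (path3 x y z) (cherry z y x) := by
  refine ⟨x, y, by simp [path3, addRoot, single], .symm <| RTree.ext ?_ ?_ (funext fun w => ?_)⟩
  · ext
    simp only [rotate, path3, addRoot, single, cherry, Set.mem_insert_iff, Set.mem_singleton_iff]
    tauto
  · simp [rotate, path3, addRoot, single, cherry]
  · by_cases hw : w = z
    · subst hw
      simp only [rotate, descendants_path3_leaf hxz hyz]
      simp [h, path3, addRoot, single, cherry, hyz.symm, hxz.symm]
    · simp only [rotate, path3, addRoot, single, cherry]
      split_ifs <;> simp_all [Ne.symm]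

lemma isRotation_cherry (hab : a ≠ b) (hac : a ≠ c) (hbc : b ≠ c) :
    IsRotation G (cherry a b c) (path3 a b c) := by
  refine ⟨b, a, by simp [cherry], .symm <| RTree.ext ?_ ?_ (funext fun w => ?_)⟩
  · ext; simp [rotate, path3, addRoot, single, cherry]
  · simp [rotate, path3, addRoot, single, cherry]
  · simp only [rotate, path3, addRoot, single, cherry]
    split_ifs <;> simp_all [Ne.symm]

/-- The search trees of the elimination orders ending in `abc`, `acb`, `cab`, `cba` and
`bca` (`bac` gives the same tree). -/
noncomputable def pentagon (a b c : V) : Fin 5 → RTree V :=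
  ![path3 a b c, path3 a c b, path3 c a b, path3 c b a, cherry a b c]

lemma pentagon_injective (hab : a ≠ b) (hac : a ≠ c) (hbc : b ≠ c) :
    Function.Injective (pentagon a b c) := by
  intro i j h
  have := congrArg (fun T => (T.root, T.parent a, T.parent b, T.parent c)) h
  fin_cases i <;> fin_cases j <;> first | rfl |
    simp [pentagon, path3, addRoot, single, cherry, hab, hac, hbc, hab.symm, hac.symm,
      hbc.symm] at this

lemma isRotation_pentagon (hab : G.Adj a b) (hbc : G.Adj b c) (hac : ¬ G.Adj a c) (hne : a ≠ c)
    (i : Fin 5) : IsRotation G (pentagon a b c i) (pentagon a b c (i + 1)) := by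
  fin_cases i
  · exact isRotation_path3_lower hab.ne hbc.ne
  · exact isRotation_path3_upper_of_adj hne hab.ne hbc.ne.symm hab
  · exact isRotation_path3_lower hne.symm hab.ne
  · exact isRotation_path3_upper_of_not_adj hbc.ne.symm hne.symm hab.ne.symm fun h => hac h.symm
  · exact isRotation_cherry hab.ne hne hbc.ne

lemma isSearchTreeOn_pentagon (hab : G.Adj a b) (hbc : G.Adj b c) (hac : ¬ G.Adj a c)
    (hne : a ≠ c) (i : Fin 5) : IsSearchTreeOn G {a, b, c} (pentagon a b c i) := by
  have hperm : ∀ {x y z : V}, (∀ v, v = x ∨ v = y ∨ v = z ↔ v = a ∨ v = b ∨ v = c) →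
      ∀ {T : RTree V}, IsSearchTreeOn G {x, y, z} T → IsSearchTreeOn G {a, b, c} T :=
    fun {x y z} h _ hT => (Set.ext h : ({x, y, z} : Set V) = {a, b, c}) ▸ hT
  fin_cases i
  · exact isSearchTreeOn_path3 hab.ne hne hbc (.inl hab.symm)
  · exact hperm (fun _ => by tauto) (isSearchTreeOn_path3 hne hab.ne hbc.symm (.inr hab.symm))
  · exact hperm (fun _ => by tauto) (isSearchTreeOn_path3 hne.symm hbc.ne.symm hab (.inr hbc))
  · exact hperm (fun _ => by tauto)
      (isSearchTreeOn_path3 hbc.ne.symm hne.symm hab.symm (.inl hbc))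
  · exact isSearchTreeOn_cherry hab hbc hac

end RTree

lemma SimpleGraph.Connected.exists_adj_adj_not_adj {G : SimpleGraph V} (hG : G.Connected)
    (hnc : G ≠ ⊤) : ∃ a b c, G.Adj a b ∧ G.Adj b c ∧ ¬ G.Adj a c ∧ a ≠ c := by
  obtain ⟨v, w, hvw, hnadj⟩ := SimpleGraph.ne_top_iff_exists_not_adj.1 hnc
  obtain ⟨p, hp⟩ := hG.exists_walk_length_eq_dist v w
  exact p.exists_adj_adj_not_adj_ne hp (hG.one_lt_dist_of_ne_of_not_adj hvw hnadj)

lemma SimpleGraph.three_le_chromaticNumber_of_cycle {W : Type*} {H : SimpleGraph W} {n : ℕ}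
    (hn : Odd n) (c : Fin (n + 2) → W) (hc : ∀ i, H.Adj (c i) (c (i + 1))) :
    3 ≤ H.chromaticNumber := by
  let f : cycleGraph (n + 2) →g H := ⟨c, fun {i j} h => by
    rcases cycleGraph_adj.1 h with h | h
    · rw [sub_eq_iff_eq_add'] at h
      exact h ▸ (hc j).symm
    · rw [sub_eq_iff_eq_add'] at h
      exact h ▸ hc i⟩
  calc (3 : ℕ∞) = (cycleGraph (n + 2)).chromaticNumber :=
        (chromaticNumber_cycleGraph_of_odd _ (by omega) (hn.add_even even_two)).symm
    _ ≤ H.chromaticNumber := chromaticNumber_mono_of_hom f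

theorem rotationGraph_noncomplete_has_C5_general {V : Type u} [Fintype V] (G : SimpleGraph V)
    (hG : G.Connected) (hnc : G ≠ ⊤) :
    (∃ c : Fin 5 → {T : RTree V // IsSearchTreeOn G Set.univ T},
      Function.Injective c ∧
        ∀ i : Fin 5, (rotationGraphOn G Set.univ).Adj (c i) (c (i + 1)))
    ∧ 3 ≤ (rotationGraphOn G Set.univ).chromaticNumber := by
  obtain ⟨a, b, c, hab, hbc, hac, hne⟩ := hG.exists_adj_adj_not_adj hnc
  have hpent := isSearchTreeOn_pentagon hab hbc hac hne
  have hinj := pentagon_injective hab.ne hne hbc.ne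
  let base : Fin 5 → {T : RTree V // IsSearchTreeOn G {a, b, c} T} := fun i => ⟨_, hpent i⟩
  have hbase (i : Fin 5) : (rotationGraphOn G {a, b, c}).Adj (base i) (base (i + 1)) :=
    ⟨hinj.ne (show i ≠ i + 1 by revert i; decide), .inl (isRotation_pentagon hab hbc hac hne i)⟩
  obtain ⟨M, hM, hcover⟩ := hG.exists_isStem (hpent 0).isConnectedWithin ⟨a, by simp⟩
  let f := hM.rotationGraphHom hcover
  have hcycle (i : Fin 5) : (rotationGraphOn G Set.univ).Adj (f (base i)) (f (base (i + 1))) :=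
    f.map_adj (hbase i)
  exact ⟨⟨f ∘ base, (hM.rotationGraphHom_injective hcover).comp
    fun i j h => hinj (congrArg Subtype.val h), hcycle⟩,
    SimpleGraph.three_le_chromaticNumber_of_cycle (by decide) _ hcycle⟩

/-- if `G` is connected, not complete, with at least 3 vertices, then
`R(G)` contains a 5-cycle; consequently `χ(R(G)) ≥ 3`. -/
theorem rotationGraph_noncomplete_has_C5 {V : Type u} [Fintype V] (G : SimpleGraph V)
    (hG : G.Connected) (h3 : 3 ≤ Fintype.card V) (hnc : G ≠ ⊤) :
    (∃ c : Fin 5 → {T : RTree V // IsSearchTreeOn G Set.univ T},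
      Function.Injective c ∧
        ∀ i : Fin 5, (rotationGraphOn G Set.univ).Adj (c i) (c (i + 1)))
    ∧ 3 ≤ (rotationGraphOn G Set.univ).chromaticNumber :=
  rotationGraph_noncomplete_has_C5_general G hG hnc
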